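/- arXiv:1710.00276 — 2 statements merged into one kernel-verified Lean document; each statement's English description precedes it below -/
import Mathlib

section
/- Let W : [0,∞) → V satisfy W'(t) = -½ A(t) W(t) with A(t) symmetric, ⟨A(t)u,u⟩ ≥ K|u|², and ‖A(t)‖_{op} ≤ C for all t, with K > 0. Let P(t) denote the solution of P'(t) = 0 with P(0) = W(0) (i.e. constant). Then |W(t) - W(0)| ≤ (C/2) ∫_0^t e^{-Ks/2} ds |W(0)| = (C/K)(1 - e^{-Kt/2})|W(0)|. -/
open Real
open scoped RealInnerProductSpace

/-- If `W' = -½ A(t) W` with `A(t)` symmetric, `⟨A(t)u,u⟩ ≥ K|u|²`, `‖A(t)‖ ≤ C`,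
and `K > 0`, then `|W(t) - W(0)| ≤ (C/K)(1 - e^{-Kt/2})|W(0)|`. -/
theorem stmt8 (V : Type*) [NormedAddCommGroup V] [InnerProductSpace ℝ V]
    [FiniteDimensional ℝ V] (K C : ℝ) (hK : 0 < K)
    (A : ℝ → V →L[ℝ] V) (W : ℝ → V)
    (hAsymm : ∀ t, 0 ≤ t → ∀ u v : V, ⟪A t u, v⟫ = ⟪u, A t v⟫)
    (hAlb : ∀ t, 0 ≤ t → ∀ u : V, K * ‖u‖ ^ 2 ≤ ⟪A t u, u⟫)
    (hAub : ∀ t, 0 ≤ t → ‖A t‖ ≤ C)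
    (hW : ∀ t, 0 ≤ t → HasDerivAt W (-(1 / 2 : ℝ) • A t (W t)) t) :
    ∀ t, 0 ≤ t → ‖W t - W 0‖ ≤ (C / K) * (1 - exp (-K * t / 2)) * ‖W 0‖ := by
  have hC : 0 ≤ C := le_trans (norm_nonneg (A 0)) (hAub 0 le_rfl)
  -- the Lyapunov function g s = exp (K s) * ⟪W s, W s⟫
  set g : ℝ → ℝ := fun s => exp (K * s) * ⟪W s, W s⟫ with hgdef
  have hg : ∀ s, 0 ≤ s → HasDerivAt g
      (K * exp (K * s) * ⟪W s, W s⟫ +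
        exp (K * s) * (⟪W s, -(1/2 : ℝ) • A s (W s)⟫ + ⟪-(1/2 : ℝ) • A s (W s), W s⟫)) s := by
    intro s hs
    have h1 : HasDerivAt (fun s => exp (K * s)) (K * exp (K * s)) s := by
      have := ((hasDerivAt_id s).const_mul K).exp
      simpa [mul_comm] using this
    exact h1.mul ((hW s hs).inner ℝ (hW s hs))
  have hgderiv : ∀ s, 0 ≤ s → HasDerivAt g
      (exp (K * s) * (K * ⟪W s, W s⟫ - ⟪A s (W s), W s⟫)) s := by
    intro s hs
    have := hg s hs
    have heq : K * exp (K * s) * ⟪W s, W s⟫ +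
        exp (K * s) * (⟪W s, -(1/2 : ℝ) • A s (W s)⟫ + ⟪-(1/2 : ℝ) • A s (W s), W s⟫)
        = exp (K * s) * (K * ⟪W s, W s⟫ - ⟪A s (W s), W s⟫) := by
      rw [real_inner_smul_right, real_inner_smul_left,
        real_inner_comm (W s) (A s (W s))]
      ring
    rwa [heq] at this
  -- g is antitone on [0, ∞)
  have hanti : AntitoneOn g (Set.Ici (0 : ℝ)) := by
    apply antitoneOn_of_deriv_nonpos (convex_Ici 0)
    · intro s hs
      exact ((hgderiv s hs).continuousAt).continuousWithinAt
    · intro s hs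
      rw [interior_Ici] at hs
      exact ((hgderiv s (le_of_lt hs)).differentiableAt).differentiableWithinAt
    · intro s hs
      rw [interior_Ici] at hs
      rw [(hgderiv s (le_of_lt hs)).deriv]
      have h1 := hAlb s (le_of_lt hs) (W s)
      rw [← real_inner_self_eq_norm_sq] at h1
      have h2 : (0:ℝ) < exp (K * s) := exp_pos _
      nlinarith
  -- decay estimate ‖W s‖ ≤ exp (-K s / 2) ‖W 0‖
  have hdecay : ∀ s, 0 ≤ s → ‖W s‖ ≤ exp (-K * s / 2) * ‖W 0‖ := by
    intro s hs
    have h1 : g s ≤ g 0 := hanti (Set.self_mem_Ici) hs hs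
    have h2 : exp (K * s) * ‖W s‖ ^ 2 ≤ ‖W 0‖ ^ 2 := by
      simpa [hgdef, real_inner_self_eq_norm_sq] using h1
    have h3 : ‖W s‖ ^ 2 ≤ (exp (-K * s / 2) * ‖W 0‖) ^ 2 := by
      have hpos : (0:ℝ) < exp (K * s) := exp_pos _
      have he : exp (-K * s / 2) ^ 2 = (exp (K * s))⁻¹ := by
        rw [sq, ← exp_add, ← exp_neg]; ring_nf
      rw [mul_pow, he, inv_mul_eq_div, le_div_iff₀ hpos, mul_comm]
      exact h2
    have h4 : 0 ≤ exp (-K * s / 2) * ‖W 0‖ := by positivity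
    nlinarith [norm_nonneg (W s)]
  -- now the main estimate via the fencing theorem
  intro t ht
  set f : ℝ → V := fun s => W s - W 0 with hfdef
  set B : ℝ → ℝ := fun s => (C / K) * (1 - exp (-K * s / 2)) * ‖W 0‖ with hBdef
  set B' : ℝ → ℝ := fun s => (C / 2) * exp (-K * s / 2) * ‖W 0‖ with hB'def
  have hB : ∀ x, HasDerivAt B (B' x) x := by
    intro x
    have h1 : HasDerivAt (fun s : ℝ => exp (-K * s / 2)) (-K / 2 * exp (-K * x / 2)) x := by
      have := (((hasDerivAt_id x).const_mul (-K)).div_const 2).exp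
      simpa [mul_comm, mul_div_assoc] using this
    have h2 := ((h1.const_sub 1).const_mul (C / K)).mul_const ‖W 0‖
    convert h2 using 1
    · rfl
    · rfl
    rw [hB'def]
    field_simp
  have hcont : ContinuousOn f (Set.Icc 0 t) := by
    intro s hs
    exact (((hW s hs.1).sub_const (W 0)).continuousAt).continuousWithinAt
  have hf' : ∀ x ∈ Set.Ico (0:ℝ) t, HasDerivWithinAt f (-(1/2 : ℝ) • A x (W x)) (Set.Ici x) x := by
    intro x hx
    exact ((hW x hx.1).sub_const (W 0)).hasDerivWithinAt
  have hbound : ∀ x ∈ Set.Ico (0:ℝ) t, ‖-(1/2 : ℝ) • A x (W x)‖ ≤ B' x := by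
    intro x hx
    have h1 : ‖A x (W x)‖ ≤ C * ‖W x‖ := by
      calc ‖A x (W x)‖ ≤ ‖A x‖ * ‖W x‖ := (A x).le_opNorm _
        _ ≤ C * ‖W x‖ := mul_le_mul_of_nonneg_right (hAub x hx.1) (norm_nonneg _)
    have h2 : ‖W x‖ ≤ exp (-K * x / 2) * ‖W 0‖ := hdecay x hx.1
    rw [norm_smul]
    simp only [norm_neg, Real.norm_eq_abs, abs_of_nonneg (by norm_num : (0:ℝ) ≤ 1/2)]
    calc (1/2 : ℝ) * ‖A x (W x)‖ ≤ (1/2) * (C * ‖W x‖) := by linarith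
      _ ≤ (1/2) * (C * (exp (-K * x / 2) * ‖W 0‖)) := by
          have := mul_le_mul_of_nonneg_left h2 hC
          linarith
      _ = B' x := by rw [hB'def]; ring
  have hB0 : ‖f 0‖ ≤ B 0 := by
    simp [hfdef, hBdef]
  have := image_norm_le_of_norm_deriv_right_le_deriv_boundary hcont hf' hB0 hB hbound
    (Set.right_mem_Icc.mpr ht)
  simpa [hfdef, hBdef] using this
end

section
/- Let V be a d-dimensional real inner product space (d ≥ 2), R a curvature tensor (with the symmetries of a Riemann tensor) on V, and k ∈ ℝ. Suppose that for every pair of orthonormal vectors u, v ∈ V the identity Ric(u,u) + Sec(u,v) = kd holds, where Ric(u,u) = Σ_i ⟨R(e_i,u)u,e_i⟩ and Sec(u,v) = ⟨R(u,v)v,u⟩. Then Ric(u,u) = (d-1)k and Sec(u,v) = k for all orthonormal u, v. -/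
open scoped RealInnerProductSpace

theorem OrthonormalBasis.exists_apply_eq {𝕜 E ι : Type*} [RCLike 𝕜] [NormedAddCommGroup E]
    [InnerProductSpace 𝕜 E] [Fintype ι] (b : OrthonormalBasis ι 𝕜 E) (i : ι) {u : E}
    (hu : ‖u‖ = 1) : ∃ c : OrthonormalBasis ι 𝕜 E, c i = u := by
  have := Module.Finite.of_basis b.toBasis
  have horth : Orthonormal 𝕜 (({i} : Set ι).domRestrict fun _ => u) :=
    ⟨fun _ => hu, fun j l hjl => absurd (Subsingleton.elim j l) hjl⟩
  obtain ⟨c, hc⟩ :=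
    horth.exists_orthonormalBasis_extension_of_card_eq (Module.finrank_eq_card_basis b.toBasis)
  exact ⟨c, hc i rfl⟩

section Curvature

variable {V ι : Type*} [NormedAddCommGroup V] [InnerProductSpace ℝ V] [Fintype ι]

/-- `Ric(u,u)`, the trace of `w ↦ R(w,u)u`. -/
noncomputable def ricci (R : V →ₗ[ℝ] V →ₗ[ℝ] V →ₗ[ℝ] V) (u : V) : ℝ :=
  LinearMap.trace ℝ V ((R.flip u).flip u)

theorem ricci_eq_sum_inner (R : V →ₗ[ℝ] V →ₗ[ℝ] V →ₗ[ℝ] V) (u : V)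
    (b : OrthonormalBasis ι ℝ V) : ricci R u = ∑ i, ⟪R (b i) u u, b i⟫ := by
  simp [ricci, LinearMap.trace_eq_sum_inner _ b, real_inner_comm]

theorem ricci_eq_of_ricci_add_inner_eq (R : V →ₗ[ℝ] V →ₗ[ℝ] V →ₗ[ℝ] V)
    (hanti : ∀ u v w : V, R u v w = -R v u w)
    (hpair : ∀ u v w z : V, ⟪R u v w, z⟫ = ⟪R w z u, v⟫)
    (b : OrthonormalBasis ι ℝ V) {k : ℝ} {u : V} (hu : ‖u‖ = 1)
    (hyp : ∀ v : V, ‖v‖ = 1 → ⟪u, v⟫ = 0 → ricci R u + ⟪R u v v, u⟫ = k * Fintype.card ι) :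
    ricci R u = ((Fintype.card ι : ℝ) - 1) * k := by
  classical
  have : Nontrivial V := nontrivial_of_ne u 0 (norm_ne_zero_iff.mp (by simp [hu]))
  obtain ⟨i₀⟩ := b.toBasis.index_nonempty
  have hcard_pos : 0 < Fintype.card ι := Fintype.card_pos_iff.mpr ⟨i₀⟩
  obtain ⟨c, hc⟩ := b.exists_apply_eq i₀ hu
  have hRuuu : R u u u = 0 := by
    have := hanti u u u
    linear_combination (norm := module) (1 / 2 : ℝ) • this
  have hterm : ∀ i ≠ i₀, ⟪R (c i) u u, c i⟫ = k * Fintype.card ι - ricci R u := by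
    intro i hi
    have hperp : ⟪u, c i⟫ = 0 := hc ▸ c.orthonormal.2 hi.symm
    have := hyp (c i) (c.orthonormal.1 i) hperp
    rw [hpair] at this
    linarith
  -- sum `Ric(u,u) + Sec(u, c i) = kn` over the orthonormal basis `(c i)_{i ≠ i₀}` of `u^⊥`
  have hsum : ricci R u = ((Fintype.card ι : ℝ) - 1) * (k * Fintype.card ι - ricci R u) := by
    calc ricci R u = ∑ i, ⟪R (c i) u u, c i⟫ := ricci_eq_sum_inner R u c
      _ = ⟪R (c i₀) u u, c i₀⟫ + ∑ i ∈ {i₀}ᶜ, ⟪R (c i) u u, c i⟫ :=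
        Fintype.sum_eq_add_sum_compl i₀ _
      _ = ∑ _i ∈ ({i₀}ᶜ : Finset ι), (k * Fintype.card ι - ricci R u) := by
        rw [hc, hRuuu, inner_zero_left, zero_add]
        exact Finset.sum_congr rfl fun i hi =>
          hterm i (Finset.mem_compl.mp hi ∘ Finset.mem_singleton.mpr)
      _ = _ := by
        rw [Finset.sum_const, Finset.card_compl, Finset.card_singleton, nsmul_eq_mul,
          Nat.cast_sub hcard_pos, Nat.cast_one]
  have hcard : (Fintype.card ι : ℝ) ≠ 0 := Nat.cast_ne_zero.mpr hcard_pos.ne'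
  exact mul_left_cancel₀ hcard (by linear_combination hsum)

end Curvature

theorem stmt14_general (d : ℕ) (V : Type*) [NormedAddCommGroup V]
    [InnerProductSpace ℝ V]
    (b : OrthonormalBasis (Fin d) ℝ V) (k : ℝ)
    (R : V →ₗ[ℝ] V →ₗ[ℝ] V →ₗ[ℝ] V)
    (hanti : ∀ u v w : V, R u v w = -R v u w)
    (hpair : ∀ u v w z : V, ⟪R u v w, z⟫ = ⟪R w z u, v⟫)
    (hyp : ∀ u v : V, ‖u‖ = 1 → ‖v‖ = 1 → ⟪u, v⟫ = 0 →
      (∑ i : Fin d, ⟪R (b i) u u, b i⟫) + ⟪R u v v, u⟫ = k * d) :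
    ∀ u v : V, ‖u‖ = 1 → ‖v‖ = 1 → ⟪u, v⟫ = 0 →
      (∑ i : Fin d, ⟪R (b i) u u, b i⟫) = ((d : ℝ) - 1) * k ∧ ⟪R u v v, u⟫ = k := by
  intro u v hu hv huv
  have hyp_u : ∀ w : V, ‖w‖ = 1 → ⟪u, w⟫ = 0 →
      ricci R u + ⟪R u w w, u⟫ = k * Fintype.card (Fin d) := fun w => by
    simpa only [ricci_eq_sum_inner R u b, Fintype.card_fin] using hyp u w hu
  have hric := ricci_eq_of_ricci_add_inner_eq R hanti hpair b hu hyp_u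
  rw [Fintype.card_fin, ricci_eq_sum_inner R u b] at hric
  exact ⟨hric, by linarith [hyp u v hu hv huv]⟩

/-- Linear-algebra step at the end of the proof of Theorem 6.1: if
`Ric(u,u) + Sec(u,v) = kd` for every orthonormal pair `u, v`, then
`Ric(u,u) = (d-1)k` and `Sec(u,v) = k` for all orthonormal `u, v`. -/
theorem stmt14 (d : ℕ) (hd : 2 ≤ d) (V : Type*) [NormedAddCommGroup V]
    [InnerProductSpace ℝ V] [FiniteDimensional ℝ V] (hrank : Module.finrank ℝ V = d)
    (b : OrthonormalBasis (Fin d) ℝ V) (k : ℝ)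
    (R : V →ₗ[ℝ] V →ₗ[ℝ] V →ₗ[ℝ] V)
    (hanti : ∀ u v w : V, R u v w = -R v u w)
    (hpair : ∀ u v w z : V, ⟪R u v w, z⟫ = ⟪R w z u, v⟫)
    (hbianchi : ∀ u v w : V, R u v w + R v w u + R w u v = 0)
    (hyp : ∀ u v : V, ‖u‖ = 1 → ‖v‖ = 1 → ⟪u, v⟫ = 0 →
      (∑ i : Fin d, ⟪R (b i) u u, b i⟫) + ⟪R u v v, u⟫ = k * d) :
    ∀ u v : V, ‖u‖ = 1 → ‖v‖ = 1 → ⟪u, v⟫ = 0 →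
      (∑ i : Fin d, ⟪R (b i) u u, b i⟫) = ((d : ℝ) - 1) * k ∧ ⟪R u v v, u⟫ = k :=
  stmt14_general d V b k R hanti hpair hyp
end
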